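/- arXiv:2211.11341 — 3 statements merged into one kernel-verified Lean document; each statement's English description precedes it below -/
import Mathlib

section
/- For all integers t ≥ 1 and k ≥ t+1 there exists an integer N = f(k,t) (depending only on k and t) such that for every n ≥ N and every t-intersecting family F ⊆ binom([n],k), the number of distinct intersections satisfies |I(F)| ≤ |I(A_t)|, where A_t = {A ∈ binom([n],k) : |A ∩ {1,…,t+2}| ≥ t+1}. -/
open Finset

/-- The collection of distinct intersections `{F ∩ G : F, G ∈ 𝓕, F ≠ G}`. -/
def interFam (F : Finset (Finset ℕ)) : Finset (Finset ℕ) :=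
  ((F ×ˢ F).filter fun p => p.1 ≠ p.2).image fun p => p.1 ∩ p.2

/-- A family is `t`-intersecting if any two members meet in at least `t` elements. -/
def tIntersecting (t : ℕ) (F : Finset (Finset ℕ)) : Prop :=
  ∀ A ∈ F, ∀ B ∈ F, t ≤ (A ∩ B).card

/-- The family `𝓐_t = {A ∈ [n]^(k) : |A ∩ {1,…,t+2}| ≥ t+1}`. -/
def At (n k t : ℕ) : Finset (Finset ℕ) :=
  ((Finset.Icc 1 n).powersetCard k).filter fun A => t + 1 ≤ (A ∩ Finset.Icc 1 (t + 2)).card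

/-- A `t`-intersecting family `F ⊆ [n]^(k)` is saturated if no `k`-set outside `F`
can be added keeping the `t`-intersecting property. -/
def saturated (n k t : ℕ) (F : Finset (Finset ℕ)) : Prop :=
  ∀ G ∈ (Finset.Icc 1 n).powersetCard k, G ∉ F → ¬ tIntersecting t (insert G F)

/-- The family of `t`-transversals `T(F)`. -/
def transv (n k t : ℕ) (F : Finset (Finset ℕ)) : Finset (Finset ℕ) :=
  (Finset.Icc 1 n).powerset.filter fun T => T.card ≤ k ∧ ∀ A ∈ F, t ≤ (T ∩ A).card

/-- The minimal members (under inclusion) of a family. -/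
def minFam (S : Finset (Finset ℕ)) : Finset (Finset ℕ) :=
  S.filter fun B => ∀ B' ∈ S, B' ⊆ B → B' = B

/-!
Extend `F` to a saturated `t`-intersecting family `S`, so that `I(F) ⊆ I(S)`. Saturation makes
the transversals of `S` of size at most `k` pairwise `t`-intersecting, and the minimal ones are
at most `k.choose t ^ k` in number (a branching argument), so they cover a bounded set `W`.

If the transversals of size `≤ t + 1` share a `t`-set `S₀`, an intersection `A ∩ B` either
contains `S₀` (at most `∑_{z ≤ k-1-t} C(n, z)` choices) or lies in a member whose minimal
transversals all have size `≥ t + 2`, so that it has fewer than `k - 1 - t` points outside `W`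
(a lower-order number of choices). Meanwhile `I(A_t)` contains all `P ∪ Z` with `P` a `t`-subset
of `{1, …, t+2}` and `Z` a `(k-1-t)`-subset of the rest, about `C(t+2, 2) ≥ 3` times the main term.

Otherwise three of these small transversals span a `(t + 2)`-set `Y` that every member meets in
at least `t + 1` points, and a permutation of `[n]` taking `Y` to `{1, …, t+2}` maps `S` into `A_t`.
-/

open Asymptotics Filter

lemma eventually_mul_sum_choose_le (M m c : ℕ) :
    ∀ᶠ n in atTop, M * ∑ z ∈ range m, n.choose z ≤ (n - c).choose m := by
  have hlow : (fun n : ℕ ↦ ∑ z ∈ range m, (n.choose z : ℝ)) =o[atTop] fun n ↦ (n : ℝ) ^ m := by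
    simpa only [Finset.sum_fn, Function.comp_def] using IsLittleO.sum fun z hz ↦
      (isTheta_choose z).isBigO.trans_isLittleO <|
        (isLittleO_pow_pow_atTop_of_lt (𝕜 := ℝ) (mem_range.mp hz)).comp_tendsto
          tendsto_natCast_atTop_atTop
  have hshift : (fun n : ℕ ↦ (n : ℝ)) =O[atTop] fun n ↦ ((n - c : ℕ) : ℝ) := by
    refine IsBigO.of_bound 2 ((eventually_ge_atTop (2 * c)).mono fun n hn ↦ ?_)
    simp only [Real.norm_natCast]
    exact_mod_cast (show n ≤ 2 * (n - c) by omega)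
  have htop : (fun n : ℕ ↦ (n : ℝ) ^ m) =O[atTop] fun n ↦ ((n - c).choose m : ℝ) :=
    (hshift.pow m).trans ((isTheta_choose m).symm.isBigO.comp_tendsto (tendsto_sub_atTop_nat c))
  filter_upwards [(hlow.trans_isBigO htop).bound (show (0 : ℝ) < 1 / (M + 1) by positivity)]
    with n hn
  have hsum : 0 ≤ ∑ z ∈ range m, (n.choose z : ℝ) := by positivity
  rw [Real.norm_of_nonneg hsum, Real.norm_natCast, div_mul_eq_mul_div, one_mul,
    le_div_iff₀ (by positivity)] at hn
  exact_mod_cast (show (M : ℝ) * ∑ z ∈ range m, (n.choose z : ℝ) ≤ (n - c).choose m by nlinarith)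

lemma choose_add_le_choose_add_mul_sum (a d m : ℕ) :
    (a + d).choose m ≤ a.choose m + d * ∑ z ∈ range m, (a + d).choose z := by
  induction d with
  | zero => simp
  | succ d ih =>
    cases m with
    | zero => simp
    | succ j =>
      have hmono : ∀ z, (a + d).choose z ≤ (a + (d + 1)).choose z :=
        fun z ↦ Nat.choose_le_choose z (by omega)
      have hsum : ∑ z ∈ range (j + 1), (a + d).choose z ≤
          ∑ z ∈ range (j + 1), (a + (d + 1)).choose z :=
        sum_le_sum fun z _ ↦ hmono z
      have hj : (a + d).choose j ≤ ∑ z ∈ range (j + 1), (a + (d + 1)).choose z :=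
        (hmono j).trans (single_le_sum (fun _ _ ↦ Nat.zero_le _) (self_mem_range_succ j))
      rw [← add_assoc, Nat.choose_succ_succ', add_assoc]
      nlinarith [Nat.mul_le_mul_left d hsum]

lemma card_powerset_filter_card_lt (U : Finset ℕ) (m : ℕ) :
    #{Z ∈ U.powerset | #Z < m} = ∑ z ∈ range m, (#U).choose z := by
  rw [card_eq_sum_card_fiberwise (f := card) (t := range m) fun Z hZ ↦ by
    simpa using (mem_filter.mp hZ).2]
  refine sum_congr rfl fun z hz ↦ ?_
  rw [← card_powersetCard, powersetCard_eq_filter, filter_filter]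
  congr 1
  exact filter_congr fun Z _ ↦ ⟨fun h ↦ h.2, fun h ↦ ⟨h ▸ mem_range.mp hz, h⟩⟩

lemma card_le_of_card_sdiff_lt {𝒥 : Finset (Finset ℕ)} {U W : Finset ℕ} {m : ℕ}
    (h : ∀ I ∈ 𝒥, I ⊆ U ∧ #(I \ W) < m) :
    #𝒥 ≤ 2 ^ #W * ∑ z ∈ range m, (#U).choose z := by
  rw [← card_powerset, ← card_powerset_filter_card_lt, ← card_product]
  refine card_le_card_of_injOn (fun I ↦ (I ∩ W, I \ W)) (fun I hI ↦ ?_) fun I _ J _ hIJ ↦ ?_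
  · obtain ⟨hIU, hIW⟩ := h I hI
    simp only [coe_product, Set.mem_prod, mem_coe, mem_powerset, mem_filter]
    exact ⟨inter_subset_right, sdiff_subset.trans hIU, hIW⟩
  · simp only [Prod.mk.injEq] at hIJ
    rw [← sdiff_union_inter I W, ← sdiff_union_inter J W, hIJ.1, hIJ.2]

lemma card_le_of_subset_of_card_sdiff_lt {𝒥 : Finset (Finset ℕ)} {U S₀ : Finset ℕ} {m : ℕ}
    (h : ∀ I ∈ 𝒥, S₀ ⊆ I ∧ I ⊆ U ∧ #(I \ S₀) < m) :
    #𝒥 ≤ ∑ z ∈ range m, (#U).choose z := by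
  rw [← card_powerset_filter_card_lt]
  refine card_le_card_of_injOn (· \ S₀) (fun I hI ↦ ?_) fun I hI J hJ hIJ ↦ ?_
  · simp only [mem_coe, mem_filter, mem_powerset]
    exact ⟨sdiff_subset.trans (h I hI).2.1, (h I hI).2.2⟩
  · rw [← sdiff_union_of_subset (h I hI).1, ← sdiff_union_of_subset (h J hJ).1]
    exact congrArg (· ∪ S₀) hIJ

lemma card_inter_lt_of_not_subset {s u : Finset ℕ} (h : ¬s ⊆ u) : #(s ∩ u) < #s :=
  card_lt_card (inf_lt_left.mpr h)

lemma exists_perm_map_eq_of_subset {U Y B : Finset ℕ} (hY : Y ⊆ U) (hB : B ⊆ U)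
    (h : #Y = #B) : ∃ σ : Equiv.Perm ℕ, Y.map σ.toEmbedding = B ∧ U.map σ.toEmbedding = U := by
  obtain ⟨τ, hτ⟩ := Equiv.Perm.exists_map_finset_eq (Y.subtype (· ∈ U)) (B.subtype (· ∈ U))
    (by rw [card_subtype, card_subtype, filter_true_of_mem hY, filter_true_of_mem hB, h])
  set σ := Equiv.Perm.ofSubtype τ
  have hσ : (Function.Embedding.subtype (· ∈ U)).trans σ.toEmbedding =
      τ.toEmbedding.trans (Function.Embedding.subtype _) := by
    ext x
    exact Equiv.Perm.ofSubtype_apply_of_mem τ x.2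
  refine ⟨σ, ?_, eq_of_subset_of_card_le (fun y hy ↦ ?_) (card_map _).ge⟩
  · rw [← subtype_map_of_mem hY, Finset.map_map, hσ, ← Finset.map_map, hτ, subtype_map_of_mem hB]
  · obtain ⟨x, hx, rfl⟩ := mem_map.mp hy
    rw [Equiv.toEmbedding_apply, Equiv.Perm.ofSubtype_apply_of_mem τ hx]
    exact (τ ⟨x, hx⟩).2

lemma mem_interFam {F : Finset (Finset ℕ)} {I : Finset ℕ} :
    I ∈ interFam F ↔ ∃ A ∈ F, ∃ B ∈ F, A ≠ B ∧ A ∩ B = I := by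
  simp [interFam, and_assoc]

lemma interFam_mono {F G : Finset (Finset ℕ)} (h : F ⊆ G) : interFam F ⊆ interFam G := by
  intro I hI
  obtain ⟨A, hA, B, hB, hAB, rfl⟩ := mem_interFam.mp hI
  exact mem_interFam.mpr ⟨A, h hA, B, h hB, hAB, rfl⟩

lemma card_interFam_le_of_map_mem {F G : Finset (Finset ℕ)} (f : ℕ ↪ ℕ)
    (h : ∀ A ∈ F, A.map f ∈ G) : #(interFam F) ≤ #(interFam G) := by
  refine card_le_card_of_injOn (·.map f) (fun I hI ↦ ?_) (map_injective f).injOn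
  obtain ⟨A, hA, B, hB, hAB, rfl⟩ := mem_interFam.mp hI
  exact mem_interFam.mpr ⟨A.map f, h A hA, B.map f, h B hB,
    (map_injective f).ne hAB, (map_inter A B).symm⟩

lemma card_inter_add_one_le {A B : Finset ℕ} {k : ℕ} (hA : #A = k) (hB : #B = k) (hAB : A ≠ B) :
    #(A ∩ B) + 1 ≤ k := by
  by_contra! h
  exact hAB ((eq_of_subset_of_card_le inter_subset_left (by omega)).symm.trans
    (eq_of_subset_of_card_le inter_subset_right (by omega)))

lemma mem_At {n k t : ℕ} {A : Finset ℕ} :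
    A ∈ At n k t ↔ A ⊆ Icc 1 n ∧ #A = k ∧ t + 1 ≤ #(A ∩ Icc 1 (t + 2)) := by
  rw [At, mem_filter, mem_powersetCard, and_assoc]

lemma insert_mem_At {n k t a : ℕ} {I : Finset ℕ} (hn : t + 2 ≤ n) (hI : I ⊆ Icc 1 n)
    (hIk : #I + 1 = k) (htr : #(I ∩ Icc 1 (t + 2)) = t) (ha : a ∈ Icc 1 (t + 2) \ I) :
    insert a I ∈ At n k t := by
  obtain ⟨ha, haI⟩ := mem_sdiff.mp ha
  refine mem_At.mpr ⟨insert_subset (Icc_subset_Icc le_rfl hn ha) hI, ?_, ?_⟩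
  · rw [card_insert_of_notMem haI, hIk]
  · rw [insert_inter_of_mem ha, card_insert_of_notMem fun h ↦ haI (mem_inter.mp h).1, htr]

lemma mem_interFam_At {n k t : ℕ} {I : Finset ℕ} (hn : t + 2 ≤ n) (hI : I ⊆ Icc 1 n)
    (hIk : #I + 1 = k) (htr : #(I ∩ Icc 1 (t + 2)) = t) : I ∈ interFam (At n k t) := by
  have htwo : #(Icc 1 (t + 2) \ I) = 2 := by
    rw [card_sdiff, htr, Nat.card_Icc]
    omega
  obtain ⟨a, b, hab, hD⟩ := card_eq_two.mp htwo
  have ha : a ∈ Icc 1 (t + 2) \ I := hD ▸ mem_insert_self a {b}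
  have hb : b ∈ Icc 1 (t + 2) \ I := hD ▸ mem_insert_of_mem (mem_singleton_self b)
  refine mem_interFam.mpr ⟨insert a I, insert_mem_At hn hI hIk htr ha,
    insert b I, insert_mem_At hn hI hIk htr hb, fun h ↦ ?_, ?_⟩
  · have : a ∈ insert b I := h ▸ mem_insert_self a I
    rcases mem_insert.mp this with h | h
    exacts [hab h, (mem_sdiff.mp ha).2 h]
  · ext x
    simp only [mem_inter, mem_insert]
    have := (mem_sdiff.mp ha).2
    have := (mem_sdiff.mp hb).2
    constructor
    · rintro ⟨rfl | h, rfl | h'⟩ <;> first | exact absurd rfl hab | assumption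
    · exact fun h ↦ ⟨Or.inr h, Or.inr h⟩

lemma choose_mul_choose_le_card_interFam_At {n t m : ℕ} (hn : t + 2 ≤ n) :
    (t + 2).choose t * (n - (t + 2)).choose m ≤ #(interFam (At n (t + 1 + m) t)) := by
  set B := Icc 1 (t + 2)
  have hBn : B ⊆ Icc 1 n := Icc_subset_Icc le_rfl hn
  have hsplit : ∀ P ⊆ B, ∀ Z ⊆ Icc 1 n \ B, (P ∪ Z) ∩ B = P ∧ (P ∪ Z) \ B = Z := by
    intro P hP Z hZ
    have hZB : Disjoint Z B := disjoint_of_subset_left hZ sdiff_disjoint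
    rw [union_inter_distrib_right, inter_eq_left.mpr hP, disjoint_iff_inter_eq_empty.mp hZB,
      union_empty, union_sdiff_distrib, sdiff_eq_empty_iff_subset.mpr hP, empty_union,
      hZB.sdiff_eq_left]
    exact ⟨rfl, rfl⟩
  calc (t + 2).choose t * (n - (t + 2)).choose m
      = #(B.powersetCard t ×ˢ (Icc 1 n \ B).powersetCard m) := by
        simp [card_sdiff_of_subset hBn, B]
    _ ≤ _ := by
      refine card_le_card_of_injOn (fun p ↦ p.1 ∪ p.2) (fun p hp ↦ ?_) fun p hp q hq hpq ↦ ?_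
      · simp only [coe_product, Set.mem_prod, mem_coe, mem_powersetCard] at hp
        obtain ⟨⟨hP, hPt⟩, hZ, hZm⟩ := hp
        have hdisj : Disjoint p.1 p.2 :=
          disjoint_of_subset_left hP (disjoint_of_subset_right hZ disjoint_sdiff)
        refine mem_interFam_At hn (union_subset (hP.trans hBn) (hZ.trans sdiff_subset)) ?_ ?_
        · rw [card_union_of_disjoint hdisj, hPt, hZm]; ring
        · rw [(hsplit _ hP _ hZ).1, hPt]
      · simp only [coe_product, Set.mem_prod, mem_coe, mem_powersetCard] at hp hq
        obtain ⟨hp₁, hp₂⟩ := hsplit _ hp.1.1 _ hp.2.1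
        obtain ⟨hq₁, hq₂⟩ := hsplit _ hq.1.1 _ hq.2.1
        simp only at hpq
        exact Prod.ext (hp₁.symm.trans (hpq ▸ hq₁)) (hp₂.symm.trans (hpq ▸ hq₂))

lemma exists_saturated {n k t : ℕ} {F : Finset (Finset ℕ)}
    (hF : F ⊆ (Icc 1 n).powersetCard k) (hFint : tIntersecting t F) :
    ∃ S, F ⊆ S ∧ S ⊆ (Icc 1 n).powersetCard k ∧ tIntersecting t S ∧ saturated n k t S := by
  classical
  set C := ((Icc 1 n).powersetCard k).powerset.filter fun G ↦ F ⊆ G ∧ tIntersecting t G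
  have hC : ∀ G, G ∈ C ↔ G ⊆ (Icc 1 n).powersetCard k ∧ F ⊆ G ∧ tIntersecting t G := fun G ↦ by
    rw [mem_filter, mem_powerset]
  obtain ⟨S, hSC, hmax⟩ := exists_max_image C card ⟨F, (hC F).mpr ⟨hF, le_rfl, hFint⟩⟩
  obtain ⟨hS, hFS, hSint⟩ := (hC S).mp hSC
  refine ⟨S, hFS, hS, hSint, fun G hG hGS hGint ↦ ?_⟩
  have := hmax _ ((hC _).mpr ⟨insert_subset hG hS, hFS.trans (subset_insert G S), hGint⟩)
  rw [card_insert_of_notMem hGS] at this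
  omega

lemma mem_transv {n k t : ℕ} {F : Finset (Finset ℕ)} {T : Finset ℕ} :
    T ∈ transv n k t F ↔ T ⊆ Icc 1 n ∧ #T ≤ k ∧ ∀ A ∈ F, t ≤ #(T ∩ A) := by
  rw [transv, mem_filter, mem_powerset]

lemma mem_minFam {X : Finset (Finset ℕ)} {T : Finset ℕ} :
    T ∈ minFam X ↔ T ∈ X ∧ ∀ T' ∈ X, T' ⊆ T → T' = T :=
  mem_filter

lemma exists_mem_minFam_subset {X : Finset (Finset ℕ)} {A : Finset ℕ} (hA : A ∈ X) :
    ∃ T ∈ minFam X, T ⊆ A := by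
  obtain ⟨T, hTA, hT⟩ := exists_minimal_le_of_wellFoundedLT (· ∈ X) A hA
  exact ⟨T, mem_minFam.mpr ⟨hT.prop, fun T' hT' h ↦ h.antisymm (hT.le_of_le hT' h)⟩, hTA⟩

lemma mem_of_saturated {n k t : ℕ} {S : Finset (Finset ℕ)} {T A : Finset ℕ}
    (hsat : saturated n k t S) (hSint : tIntersecting t S) (htk : t ≤ k)
    (hT : ∀ B ∈ S, t ≤ #(T ∩ B)) (hTA : T ⊆ A) (hA : A ∈ (Icc 1 n).powersetCard k) : A ∈ S := by
  by_contra hAS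
  have hAB : ∀ B ∈ S, t ≤ #(A ∩ B) :=
    fun B hB ↦ (hT B hB).trans (card_le_card (inter_subset_inter_right hTA))
  refine hsat A hA hAS fun X hX Y hY ↦ ?_
  rw [mem_insert] at hX hY
  rcases hX with rfl | hX <;> rcases hY with rfl | hY
  · rwa [inter_self, (mem_powersetCard.mp hA).2]
  · exact hAB Y hY
  · rw [inter_comm]
    exact hAB X hX
  · exact hSint X hX Y hY

lemma exists_superset_inter_eq {U T T' : Finset ℕ} {k : ℕ} (hT : T ⊆ U) (hT' : T' ⊆ U)
    (hTk : #T ≤ k) (hT'k : #T' ≤ k) (hU : 2 * k ≤ #U) :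
    ∃ A ∈ U.powersetCard k, ∃ B ∈ U.powersetCard k, T ⊆ A ∧ T' ⊆ B ∧ A ∩ B = T ∩ T' := by
  set R := U \ (T ∪ T')
  have hR : #U ≤ #R + #T + #T' := by
    have := card_union_le T T'
    rw [card_sdiff_of_subset (union_subset hT hT')]
    omega
  obtain ⟨E, hER, hE⟩ := exists_subset_card_eq (show k - #T ≤ #R by omega)
  obtain ⟨E', hE'R, hE'⟩ :=
    exists_subset_card_eq (show k - #T' ≤ #(R \ E) by rw [card_sdiff_of_subset hER]; omega)
  have hEmem : ∀ x ∈ E, x ∈ U ∧ x ∉ T ∧ x ∉ T' := fun x hx ↦ by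
    simpa [R, not_or] using hER hx
  have hE'mem : ∀ x ∈ E', x ∈ U ∧ x ∉ T ∧ x ∉ T' ∧ x ∉ E := fun x hx ↦ by
    simpa [R, not_or, and_assoc] using hE'R hx
  have hTE : Disjoint T E := disjoint_right.mpr fun x hx ↦ (hEmem x hx).2.1
  have hT'E' : Disjoint T' E' := disjoint_right.mpr fun x hx ↦ (hE'mem x hx).2.2.1
  refine ⟨T ∪ E, mem_powersetCard.mpr ⟨union_subset hT fun x hx ↦ (hEmem x hx).1, ?_⟩,
    T' ∪ E', mem_powersetCard.mpr ⟨union_subset hT' fun x hx ↦ (hE'mem x hx).1, ?_⟩,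
    subset_union_left, subset_union_left, ?_⟩
  · rw [card_union_of_disjoint hTE, hE]; omega
  · rw [card_union_of_disjoint hT'E', hE']; omega
  · ext x
    simp only [mem_inter, mem_union]
    have := hEmem x
    have := hE'mem x
    tauto

lemma tIntersecting_transv {n k t : ℕ} {S : Finset (Finset ℕ)} (hsat : saturated n k t S)
    (hSint : tIntersecting t S) (htk : t ≤ k) (hn : 2 * k ≤ n) :
    tIntersecting t (transv n k t S) := by
  intro T hT T' hT'
  obtain ⟨hTn, hTk, hTS⟩ := mem_transv.mp hT
  obtain ⟨hT'n, hT'k, hT'S⟩ := mem_transv.mp hT'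
  obtain ⟨A, hA, B, hB, hTA, hT'B, hAB⟩ :=
    exists_superset_inter_eq hTn hT'n hTk hT'k (by simpa using hn)
  rw [← hAB]
  exact hSint A (mem_of_saturated hsat hSint htk hTS hTA hA)
    B (mem_of_saturated hsat hSint htk hT'S hT'B hB)

lemma eq_of_mem_minFam_transv {n k t : ℕ} {S : Finset (Finset ℕ)} {P T : Finset ℕ}
    (hT : T ∈ minFam (transv n k t S)) (hPT : P ⊆ T) (hP : ∀ A ∈ S, t ≤ #(P ∩ A)) : P = T := by
  obtain ⟨hT, hmin⟩ := mem_minFam.mp hT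
  obtain ⟨hTn, hTk, -⟩ := mem_transv.mp hT
  exact hmin P (mem_transv.mpr ⟨hPT.trans hTn, (card_le_card hPT).trans hTk, hP⟩) hPT

/-- If `P` is not itself a transversal, some `A ∈ S` has `#(P ∩ A) < t`, and every minimal
transversal through `P` contains `P ∪ Q` for one of the `k.choose t` sets `Q ⊆ A` of size `t`. -/
lemma card_filter_minFam_transv_le {n k t : ℕ} {S : Finset (Finset ℕ)}
    (hS : ∀ A ∈ S, #A = k) (htk : t ≤ k) (j : ℕ) (P : Finset ℕ) :
    #{T ∈ minFam (transv n k t S) | P ⊆ T ∧ #T ≤ #P + j} ≤ k.choose t ^ j := by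
  induction j generalizing P with
  | zero =>
    refine (card_le_card fun T hT ↦ ?_).trans (card_singleton P).le
    obtain ⟨-, hPT, hTP⟩ := mem_filter.mp hT
    exact mem_singleton.mpr (eq_of_subset_of_card_le hPT hTP).symm
  | succ j ih =>
    by_cases hP : ∀ A ∈ S, t ≤ #(P ∩ A)
    · refine (card_le_card fun T hT ↦ ?_).trans ((card_singleton P).le.trans
        (Nat.one_le_pow _ _ (Nat.choose_pos htk)))
      obtain ⟨hT, hPT, -⟩ := mem_filter.mp hT
      exact mem_singleton.mpr (eq_of_mem_minFam_transv hT hPT hP).symm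
    push Not at hP
    obtain ⟨A, hA, hPA⟩ := hP
    calc _ ≤ #((A.powersetCard t).biUnion fun Q ↦
          {T ∈ minFam (transv n k t S) | P ∪ Q ⊆ T ∧ #T ≤ #(P ∪ Q) + j}) := by
          refine card_le_card fun T hT ↦ ?_
          obtain ⟨hTmin, hPT, hTP⟩ := mem_filter.mp hT
          obtain ⟨Q, hQ, hQt⟩ :=
            exists_subset_card_eq ((mem_transv.mp (mem_minFam.mp hTmin).1).2.2 A hA)
          have hQP : ¬Q ⊆ P := fun h ↦ by
            have := card_le_card (subset_inter h (hQ.trans inter_subset_right))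
            omega
          obtain ⟨q, hqQ, hqP⟩ := not_subset.mp hQP
          have : #P + 1 ≤ #(P ∪ Q) := by
            rw [← card_insert_of_notMem hqP]
            exact card_le_card (insert_subset (mem_union_right P hqQ) subset_union_left)
          exact mem_biUnion.mpr ⟨Q, mem_powersetCard.mpr ⟨hQ.trans inter_subset_right, hQt⟩,
            mem_filter.mpr ⟨hTmin, union_subset hPT (hQ.trans inter_subset_left), by omega⟩⟩
      _ ≤ ∑ _Q ∈ A.powersetCard t, k.choose t ^ j :=
          card_biUnion_le.trans (sum_le_sum fun Q _ ↦ ih _)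
      _ = k.choose t ^ (j + 1) := by
          rw [sum_const, card_powersetCard, hS A hA, smul_eq_mul, pow_succ, mul_comm]

lemma card_minFam_transv_le {n k t : ℕ} {S : Finset (Finset ℕ)} (hS : ∀ A ∈ S, #A = k)
    (htk : t ≤ k) : #(minFam (transv n k t S)) ≤ k.choose t ^ k := by
  convert card_filter_minFam_transv_le (n := n) hS htk k ∅ using 2
  refine (filter_true_of_mem fun T hT ↦ ⟨empty_subset T, ?_⟩).symm
  simpa using (mem_transv.mp (mem_minFam.mp hT).1).2.1

lemma card_sdiff_add_le_of_not_subset {n k t : ℕ} {S : Finset (Finset ℕ)} {S₀ W C I : Finset ℕ}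
    (hS : S ⊆ (Icc 1 n).powersetCard k) (hSint : tIntersecting t S)
    (hW : ∀ T ∈ minFam (transv n k t S), T ⊆ W)
    (hS₀T : ∀ T ∈ transv n k t S, #T ≤ t + 1 → S₀ ⊆ T)
    (hC : C ∈ S) (hS₀C : ¬S₀ ⊆ C) (hIC : I ⊆ C) : #(I \ W) + (t + 2) ≤ k := by
  obtain ⟨hCn, hCk⟩ := mem_powersetCard.mp (hS hC)
  obtain ⟨T, hT, hTC⟩ := exists_mem_minFam_subset
    (mem_transv.mpr ⟨hCn, hCk.le, fun B hB ↦ hSint C hC B hB⟩)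
  have hTt : t + 2 ≤ #T := by
    by_contra! h
    exact hS₀C ((hS₀T T (mem_minFam.mp hT).1 (by omega)).trans hTC)
  have := card_le_card (sdiff_subset_sdiff hIC (hW T hT))
  rw [card_sdiff_of_subset hTC, hCk] at this
  have := card_le_card hTC
  omega

lemma card_interFam_le_of_common {n t m : ℕ} {S : Finset (Finset ℕ)} {S₀ W : Finset ℕ}
    (hS : S ⊆ (Icc 1 n).powersetCard (t + 1 + m)) (hSint : tIntersecting t S) (hS₀ : #S₀ = t)
    (hW : ∀ T ∈ minFam (transv n (t + 1 + m) t S), T ⊆ W)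
    (hS₀T : ∀ T ∈ transv n (t + 1 + m) t S, #T ≤ t + 1 → S₀ ⊆ T) :
    #(interFam S) ≤ ∑ z ∈ range (m + 1), n.choose z + 2 ^ #W * ∑ z ∈ range m, n.choose z := by
  have hIn : ∀ I ∈ interFam S,
      ∃ A ∈ S, ∃ B ∈ S, A ∩ B = I ∧ I ⊆ Icc 1 n ∧ #I + 1 ≤ t + 1 + m := by
    intro I hI
    obtain ⟨A, hA, B, hB, hAB, rfl⟩ := mem_interFam.mp hI
    obtain ⟨hAn, hAk⟩ := mem_powersetCard.mp (hS hA)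
    exact ⟨A, hA, B, hB, rfl, inter_subset_left.trans hAn,
      card_inter_add_one_le hAk (mem_powersetCard.mp (hS hB)).2 hAB⟩
  rw [← card_filter_add_card_filter_not (S₀ ⊆ ·)]
  have hn : #(Icc 1 n) = n := by simp
  refine add_le_add ?_ ?_ <;> rw [← hn]
  · refine card_le_of_subset_of_card_sdiff_lt (S₀ := S₀) fun I hI ↦ ?_
    obtain ⟨hI, hS₀I⟩ := mem_filter.mp hI
    obtain ⟨-, -, -, -, -, hIn, hIk⟩ := hIn I hI
    rw [card_sdiff_of_subset hS₀I, hS₀]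
    exact ⟨hS₀I, hIn, by omega⟩
  · refine card_le_of_card_sdiff_lt fun I hI ↦ ?_
    obtain ⟨hI, hS₀I⟩ := mem_filter.mp hI
    obtain ⟨A, hA, B, hB, rfl, hIn, -⟩ := hIn I hI
    refine ⟨hIn, ?_⟩
    by_cases hS₀A : S₀ ⊆ A
    · have := card_sdiff_add_le_of_not_subset hS hSint hW hS₀T hB
        (fun hS₀B ↦ hS₀I (subset_inter hS₀A hS₀B)) (inter_subset_right (s₁ := A))
      omega
    · have := card_sdiff_add_le_of_not_subset hS hSint hW hS₀T hA hS₀A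
        (inter_subset_left (s₂ := B))
      omega

lemma card_interFam_le_At_of_common {n t m : ℕ} {S : Finset (Finset ℕ)} {S₀ : Finset ℕ}
    (ht : 1 ≤ t) (hn : t + 2 ≤ n)
    (hS : S ⊆ (Icc 1 n).powersetCard (t + 1 + m)) (hSint : tIntersecting t S) (hS₀ : #S₀ = t)
    (hS₀T : ∀ T ∈ transv n (t + 1 + m) t S, #T ≤ t + 1 → S₀ ⊆ T)
    (hlower : (2 ^ ((t + 1 + m) * (t + 1 + m).choose t ^ (t + 1 + m)) + t + 3) *
      ∑ z ∈ range m, n.choose z ≤ (n - (t + 2)).choose m) :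
    #(interFam S) ≤ #(interFam (At n (t + 1 + m) t)) := by
  set k := t + 1 + m
  set L := ∑ z ∈ range m, n.choose z
  set W := (minFam (transv n k t S)).biUnion id
  have hW : #W ≤ k * k.choose t ^ k := by
    refine (card_biUnion_le_card_mul _ _ k fun T hT ↦ ?_).trans ?_
    · exact (mem_transv.mp (mem_minFam.mp hT).1).2.1
    · rw [mul_comm]
      exact Nat.mul_le_mul_left k (card_minFam_transv_le
        (fun A hA ↦ (mem_powersetCard.mp (hS hA)).2) (by omega))
  have hI : #(interFam S) ≤ L + n.choose m + 2 ^ #W * L := by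
    simpa only [sum_range_succ] using
      card_interFam_le_of_common hS hSint hS₀ (fun T hT ↦ subset_biUnion_of_mem id hT) hS₀T
  have hpascal : n.choose m ≤ (n - (t + 2)).choose m + (t + 2) * L := by
    simpa [Nat.sub_add_cancel hn] using choose_add_le_choose_add_mul_sum (n - (t + 2)) (t + 2) m
  have h2W : 2 ^ #W * L ≤ 2 ^ (k * k.choose t ^ k) * L :=
    Nat.mul_le_mul_right L (Nat.pow_le_pow_right two_pos hW)
  have h3 : 3 ≤ (t + 2).choose t := by
    rw [Nat.choose_symm_add]
    exact Nat.choose_le_choose 2 (show 3 ≤ t + 2 by omega)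
  calc #(interFam S) ≤ L + n.choose m + 2 ^ #W * L := hI
    _ ≤ (n - (t + 2)).choose m + (2 ^ (k * k.choose t ^ k) + t + 3) * L := by linarith
    _ ≤ 3 * (n - (t + 2)).choose m := by linarith
    _ ≤ (t + 2).choose t * (n - (t + 2)).choose m := Nat.mul_le_mul_right _ h3
    _ ≤ _ := choose_mul_choose_le_card_interFam_At hn

lemma exists_three_of_forall_not_subset {M : Finset (Finset ℕ)} {t : ℕ} (hM : tIntersecting t M)
    (hsmall : ∀ T ∈ M, #T ≤ t + 1) (hnot : ∀ S₀ : Finset ℕ, #S₀ = t → ∃ T ∈ M, ¬S₀ ⊆ T) :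
    ∃ T₁ ∈ M, ∃ T₂ ∈ M, ∃ T₃ ∈ M,
      #(T₁ ∪ T₂) = t + 2 ∧ T₃ ⊆ T₁ ∪ T₂ ∧ #(T₁ ∩ T₂ ∩ T₃) < t := by
  obtain ⟨T₁, h₁, -⟩ := hnot (range t) (card_range t)
  obtain ⟨S₀, hS₀T₁, hS₀⟩ := exists_subset_card_eq (by simpa using hM T₁ h₁ T₁ h₁)
  obtain ⟨T₂, h₂, hS₀T₂⟩ := hnot S₀ hS₀
  have hT₁₂ := card_inter_lt_of_not_subset fun h ↦ hS₀T₂ (hS₀T₁.trans h)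
  have := hM T₁ h₁ T₂ h₂
  have := hsmall T₁ h₁
  have hP : #(T₁ ∩ T₂) = t := by omega
  obtain ⟨T₃, h₃, hPT₃⟩ := hnot (T₁ ∩ T₂) hP
  have hP₃ : #(T₁ ∩ T₂ ∩ T₃) < t := hP ▸ card_inter_lt_of_not_subset hPT₃
  have hT₂₁ : ¬T₂ ⊆ T₁ := fun h ↦ by
    rw [inter_eq_right.mpr h] at hP hPT₃
    have := card_inter_lt_of_not_subset hPT₃
    have := hM T₂ h₂ T₃ h₃
    omega
  have hT₂₁ := card_inter_lt_of_not_subset hT₂₁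
  rw [inter_comm] at hT₂₁
  have := hsmall T₂ h₂
  refine ⟨T₁, h₁, T₂, h₂, T₃, h₃, ?_, ?_, hP₃⟩
  · have := card_union_add_card_inter T₁ T₂
    omega
  · by_contra hsub
    have := card_inter_lt_of_not_subset hsub
    have h := card_union_add_card_inter (T₃ ∩ T₁) (T₃ ∩ T₂)
    rw [← inter_union_distrib_left, inter_inter_inter_comm, inter_self,
      inter_comm T₃ (T₁ ∩ T₂)] at h
    have := hM T₃ h₃ T₁ h₁
    have := hM T₃ h₃ T₂ h₂
    have := hsmall T₃ h₃
    omega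

lemma add_one_le_card_inter_of_three {t : ℕ} {Y T₁ T₂ T₃ A : Finset ℕ}
    (h₁ : T₁ ⊆ Y) (h₂ : T₂ ⊆ Y) (h₃ : T₃ ⊆ Y) (h : #(T₁ ∩ T₂ ∩ T₃) < t)
    (hA₁ : t ≤ #(T₁ ∩ A)) (hA₂ : t ≤ #(T₂ ∩ A)) (hA₃ : t ≤ #(T₃ ∩ A)) :
    t + 1 ≤ #(A ∩ Y) := by
  by_contra! hAY
  have hsub : ∀ T ⊆ Y, T ∩ A ⊆ A ∩ Y := fun T hT x hx ↦
    mem_inter.mpr ⟨(mem_inter.mp hx).2, hT (mem_inter.mp hx).1⟩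
  have key : ∀ T ⊆ Y, t ≤ #(T ∩ A) → A ∩ Y ⊆ T := fun T hT hTA ↦
    (eq_of_subset_of_card_le (hsub T hT) (by omega)) ▸ inter_subset_left
  have := card_le_card
    (subset_inter (subset_inter (key T₁ h₁ hA₁) (key T₂ h₂ hA₂)) (key T₃ h₃ hA₃))
  have := card_le_card (hsub T₁ h₁)
  omega

lemma exists_card_inter_ge_of_not_common {n k t : ℕ} {S : Finset (Finset ℕ)}
    (hsat : saturated n k t S) (hSint : tIntersecting t S) (htk : t ≤ k) (hn : 2 * k ≤ n)
    (hnot : ∀ S₀ : Finset ℕ, #S₀ = t → ∃ T ∈ transv n k t S, #T ≤ t + 1 ∧ ¬S₀ ⊆ T) :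
    ∃ Y ⊆ Icc 1 n, #Y = t + 2 ∧ ∀ A ∈ S, t + 1 ≤ #(A ∩ Y) := by
  set M := (transv n k t S).filter (#· ≤ t + 1)
  have hM : ∀ T ∈ M, T ⊆ Icc 1 n ∧ ∀ A ∈ S, t ≤ #(T ∩ A) := fun T hT ↦
    have h := mem_transv.mp (mem_filter.mp hT).1
    ⟨h.1, h.2.2⟩
  obtain ⟨T₁, h₁, T₂, h₂, T₃, h₃, hY, hT₃, hsmall⟩ := exists_three_of_forall_not_subset
    (fun T hT T' hT' ↦ tIntersecting_transv hsat hSint htk hn T (mem_filter.mp hT).1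
      T' (mem_filter.mp hT').1)
    (fun T hT ↦ (mem_filter.mp hT).2)
    (fun S₀ hS₀ ↦ by
      obtain ⟨T, hT, hTt, hS₀T⟩ := hnot S₀ hS₀
      exact ⟨T, mem_filter.mpr ⟨hT, hTt⟩, hS₀T⟩)
  refine ⟨T₁ ∪ T₂, union_subset (hM T₁ h₁).1 (hM T₂ h₂).1, hY, fun A hA ↦ ?_⟩
  exact add_one_le_card_inter_of_three subset_union_left subset_union_right hT₃ hsmall
    ((hM T₁ h₁).2 A hA) ((hM T₂ h₂).2 A hA) ((hM T₃ h₃).2 A hA)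

lemma card_interFam_le_At_of_card_inter_ge {n k t : ℕ} {S : Finset (Finset ℕ)} {Y : Finset ℕ}
    (hS : S ⊆ (Icc 1 n).powersetCard k) (hn : t + 2 ≤ n) (hY : Y ⊆ Icc 1 n) (hYt : #Y = t + 2)
    (hSY : ∀ A ∈ S, t + 1 ≤ #(A ∩ Y)) : #(interFam S) ≤ #(interFam (At n k t)) := by
  obtain ⟨σ, hσY, hσn⟩ := exists_perm_map_eq_of_subset hY (Icc_subset_Icc le_rfl hn)
    (by simp [hYt])
  refine card_interFam_le_of_map_mem σ.toEmbedding fun A hA ↦ ?_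
  obtain ⟨hAn, hAk⟩ := mem_powersetCard.mp (hS hA)
  refine mem_At.mpr ⟨hσn ▸ map_subset_map.mpr hAn, by rw [card_map, hAk], ?_⟩
  rw [← hσY, ← map_inter, card_map]
  exact hSY A hA

theorem stmt0 :
    ∀ t : ℕ, 1 ≤ t → ∀ k : ℕ, t + 1 ≤ k →
      ∃ N : ℕ, ∀ n : ℕ, N ≤ n →
        ∀ F ⊆ (Finset.Icc 1 n).powersetCard k, tIntersecting t F →
          (interFam F).card ≤ (interFam (At n k t)).card := by
  intro t ht k hk
  obtain ⟨m, rfl⟩ : ∃ m, k = t + 1 + m := ⟨k - (t + 1), by omega⟩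
  -- `k * k.choose t ^ k` bounds the number of points covered by minimal transversals.
  obtain ⟨N, hN⟩ := eventually_atTop.mp ((eventually_ge_atTop (2 * (t + 1 + m))).and
    (eventually_mul_sum_choose_le
      (2 ^ ((t + 1 + m) * (t + 1 + m).choose t ^ (t + 1 + m)) + t + 3) m (t + 2)))
  refine ⟨N, fun n hn F hF hFint ↦ ?_⟩
  obtain ⟨hkn, hlower⟩ := hN n hn
  obtain ⟨S, hFS, hS, hSint, hsat⟩ := exists_saturated hF hFint
  refine (card_le_card (interFam_mono hFS)).trans ?_
  by_cases hcommon : ∃ S₀ : Finset ℕ, #S₀ = t ∧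
      ∀ T ∈ transv n (t + 1 + m) t S, #T ≤ t + 1 → S₀ ⊆ T
  · obtain ⟨S₀, hS₀, hS₀T⟩ := hcommon
    exact card_interFam_le_At_of_common ht (by omega) hS hSint hS₀ hS₀T hlower
  · push Not at hcommon
    obtain ⟨Y, hY, hYt, hSY⟩ :=
      exists_card_inter_ge_of_not_common hsat hSint (by omega) hkn hcommon
    exact card_interFam_le_At_of_card_inter_ge hS (by omega) hY hYt hSY
end

section
/- Let 1 ≤ t < k and n ≥ 2k − t be integers, let X ⊆ [n] be a t-element set, and let S_X = {A ∈ binom([n],k) : X ⊆ A} be the complete sunflower with core X. Then |I(S_X)| = Σ_{j=0}^{k−t−1} C(n−t, j), where C(a,b) denotes the binomial coefficient a choose b. -/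
open Finset

theorem stmt10 (n k t : ℕ) (ht : 1 ≤ t) (htk : t < k) (hn : 2 * k - t ≤ n)
    (X : Finset ℕ) (hX : X ⊆ Finset.Icc 1 n) (hXcard : X.card = t) :
    (interFam (((Finset.Icc 1 n).powersetCard k).filter (fun A => X ⊆ A))).card
      = ∑ j ∈ Finset.range (k - t), (n - t).choose j := by
  have htn : t ≤ n := le_trans (le_trans htk.le (by omega)) hn
  set S : Finset ℕ := Finset.Icc 1 n \ X with hSdef
  have hScard : S.card = n - t := by
    rw [hSdef, card_sdiff_of_subset hX, Nat.card_Icc, hXcard]; omega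
  have hSn : 2 * (k - t) ≤ S.card := by omega
  -- the key set equality
  have key : interFam (((Finset.Icc 1 n).powersetCard k).filter (fun A => X ⊆ A))
      = (S.powerset.filter (fun B => B.card < k - t)).image (fun B => X ∪ B) := by
    ext Y
    simp only [interFam, mem_image, mem_filter, mem_product, mem_powerset, mem_powersetCard]
    constructor
    · rintro ⟨⟨A, B⟩, ⟨⟨⟨⟨hA, hAcard⟩, hAX⟩, ⟨hB, hBcard⟩, hBX⟩, hne⟩, rfl⟩
      have hA' : A ⊆ Finset.Icc 1 n := hA
      have hAcard' : A.card = k := hAcard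
      have hBcard' : B.card = k := hBcard
      have hAX' : X ⊆ A := hAX
      have hBX' : X ⊆ B := hBX
      have hne' : A ≠ B := hne
      have hXsub : X ⊆ A ∩ B := subset_inter hAX' hBX'
      have hXle : t ≤ (A ∩ B).card := hXcard ▸ card_le_card hXsub
      have hABlt : (A ∩ B).card < k := by
        rcases lt_or_eq_of_le (card_le_card (inter_subset_left : A ∩ B ⊆ A)) with h | h
        · omega
        · exfalso
          have hAB : A ∩ B = A := eq_of_subset_of_card_le inter_subset_left (by omega)
          have hsub : A ⊆ B := by rw [← hAB]; exact inter_subset_right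
          exact hne' (eq_of_subset_of_card_le hsub (by omega))
      refine ⟨(A ∩ B) \ X, ⟨fun x hx => ?_, ?_⟩, ?_⟩
      · simp only [mem_sdiff, mem_inter] at hx
        exact mem_sdiff.2 ⟨hA' hx.1.1, hx.2⟩
      · rw [card_sdiff_of_subset hXsub, hXcard]; omega
      · exact union_sdiff_of_subset hXsub
    · rintro ⟨B, ⟨hBS, hBcard⟩, rfl⟩
      have hBX : Disjoint B X := by
        refine disjoint_left.2 fun x hx hxX => ?_
        exact (mem_sdiff.1 (hBS hx)).2 hxX
      -- pick C ⊆ S \ B with card k - t - B.card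
      obtain ⟨C, hCsub, hCcard⟩ := exists_subset_card_eq
        (show k - t - B.card ≤ (S \ B).card by rw [card_sdiff_of_subset hBS]; omega)
      obtain ⟨D, hDsub, hDcard⟩ := exists_subset_card_eq
        (show k - t - B.card ≤ ((S \ B) \ C).card by
          rw [card_sdiff_of_subset hCsub, card_sdiff_of_subset hBS]; omega)
      have hDsub' : D ⊆ S \ B := hDsub.trans sdiff_subset
      have hCD : Disjoint C D := disjoint_right.2 fun x hx => (mem_sdiff.1 (hDsub hx)).2
      have hCS : C ⊆ S := hCsub.trans sdiff_subset
      have hDS : D ⊆ S := hDsub'.trans sdiff_subset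
      have hXB_disj : Disjoint X B := hBX.symm
      have hXC : Disjoint X C := disjoint_right.2 fun x hx => (mem_sdiff.1 (hCS hx)).2
      have hXD : Disjoint X D := disjoint_right.2 fun x hx => (mem_sdiff.1 (hDS hx)).2
      have hBC : Disjoint B C := disjoint_right.2 fun x hx => (mem_sdiff.1 (hCsub hx)).2
      have hBD : Disjoint B D := disjoint_right.2 fun x hx => (mem_sdiff.1 (hDsub' hx)).2
      have hSIcc : S ⊆ Finset.Icc 1 n := sdiff_subset
      have hcardF : (X ∪ B ∪ C).card = k := by
        rw [card_union_of_disjoint (by simp [disjoint_union_left, hXC, hBC]),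
          card_union_of_disjoint hXB_disj, hXcard, hCcard]
        omega
      have hcardG : (X ∪ B ∪ D).card = k := by
        rw [card_union_of_disjoint (by simp [disjoint_union_left, hXD, hBD]),
          card_union_of_disjoint hXB_disj, hXcard, hDcard]
        omega
      refine ⟨(X ∪ B ∪ C, X ∪ B ∪ D), ⟨⟨⟨⟨?_, hcardF⟩, ?_⟩, ⟨?_, hcardG⟩, ?_⟩, ?_⟩, ?_⟩
      · exact union_subset (union_subset hX (hBS.trans hSIcc)) (hCS.trans hSIcc)
      · exact subset_union_left.trans subset_union_left
      · exact union_subset (union_subset hX (hBS.trans hSIcc)) (hDS.trans hSIcc)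
      · exact subset_union_left.trans subset_union_left
      · -- F ≠ G since C nonempty and C ∩ G = ∅
        have hCne : C.Nonempty := by
          rw [← card_pos, hCcard]; omega
        obtain ⟨x, hx⟩ := hCne
        intro h
        have h' : X ∪ B ∪ C = X ∪ B ∪ D := h
        have hxG : x ∈ X ∪ B ∪ D := h' ▸ (mem_union_right _ hx)
        simp only [mem_union] at hxG
        rcases hxG with (hxX | hxB) | hxD
        · exact (disjoint_left.1 hXC hxX) hx
        · exact (disjoint_left.1 hBC hxB) hx
        · exact (disjoint_left.1 hCD hx) hxD
      · -- intersection equals X ∪ B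
        show (X ∪ B ∪ C) ∩ (X ∪ B ∪ D) = X ∪ B
        rw [← union_inter_distrib_left, disjoint_iff_inter_eq_empty.1 hCD, union_empty]
  rw [key]
  rw [card_image_of_injOn]
  · -- count the filtered powerset
    have hsplit : (S.powerset.filter (fun B => B.card < k - t))
        = (Finset.range (k - t)).biUnion (fun j => S.powersetCard j) := by
      ext B
      simp only [mem_filter, mem_powerset, mem_biUnion, mem_range, mem_powersetCard]
      constructor
      · rintro ⟨h1, h2⟩; exact ⟨B.card, h2, h1, rfl⟩
      · rintro ⟨j, hj, h1, rfl⟩; exact ⟨h1, hj⟩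
    rw [hsplit, card_biUnion]
    · refine Finset.sum_congr rfl fun j _ => ?_
      rw [card_powersetCard, hScard]
    · intro a _ b _ hab
      refine disjoint_left.2 fun B hB hB' => ?_
      rw [mem_powersetCard] at hB hB'
      exact hab (hB.2 ▸ hB'.2.symm ▸ rfl)
  · -- injectivity of B ↦ X ∪ B
    intro B hB B' hB' hEq
    simp only [coe_filter, Set.mem_setOf_eq, mem_powerset] at hB hB'
    have h1 : B = (X ∪ B) \ X := by
      rw [union_sdiff_left]
      exact (sdiff_eq_self_of_disjoint (disjoint_left.2
        fun x hx hxX => (mem_sdiff.1 (hB.1 hx)).2 hxX)).symm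
    have h2 : B' = (X ∪ B') \ X := by
      rw [union_sdiff_left]
      exact (sdiff_eq_self_of_disjoint (disjoint_left.2
        fun x hx hxX => (mem_sdiff.1 (hB'.1 hx)).2 hxX)).symm
    dsimp only at hEq
    rw [h1, h2, hEq]
end

section
/- Let F ⊆ binom([n],k) be a saturated t-intersecting family, let B = B(F) be the family of minimal members of the t-transversal family T(F), and let s = min{|B| : B ∈ B}. For s ≤ ℓ ≤ k define F^{(ℓ)} = {F ∈ F : max{|B| : B ∈ B, B ⊆ F} = ℓ} and I_ℓ = {F ∩ G : F ∈ F^{(ℓ)}, G ∈ F^{(s)} ∪ ⋯ ∪ F^{(ℓ)}}. Then for every ℓ with max(s, t) ≤ ℓ ≤ k, |I_ℓ| ≤ |B^{(ℓ)}| · (Σ_{i=t}^{ℓ} C(ℓ, i)) · (Σ_{j=0}^{k−ℓ} C(n, j)), where B^{(ℓ)} = {B ∈ B : |B| = ℓ} and C(a,b) denotes the binomial coefficient a choose b. -/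
open Finset

/-- The level of a set `A` relative to the family `𝓑`: the maximal size of a
member of `𝓑` contained in `A`. -/
def lvl (Bfam : Finset (Finset ℕ)) (A : Finset ℕ) : ℕ :=
  (Bfam.filter fun B => B ⊆ A).sup Finset.card

theorem stmt13 (n k t ℓ s : ℕ) (F : Finset (Finset ℕ))
    (hF : F ⊆ (Finset.Icc 1 n).powersetCard k)
    (hint : tIntersecting t F) (hsat : saturated n k t F)
    (hs_lb : ∀ B ∈ minFam (transv n k t F), s ≤ B.card)
    (hs_mem : ∃ B ∈ minFam (transv n k t F), B.card = s)
    (hℓ₁ : max s t ≤ ℓ) (hℓ₂ : ℓ ≤ k) :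
    (((F.filter fun A => lvl (minFam (transv n k t F)) A = ℓ) ×ˢ
        (F.filter fun A => s ≤ lvl (minFam (transv n k t F)) A ∧
          lvl (minFam (transv n k t F)) A ≤ ℓ)).image fun p => p.1 ∩ p.2).card
      ≤ ((minFam (transv n k t F)).filter fun B => B.card = ℓ).card
          * (∑ i ∈ Finset.Icc t ℓ, ℓ.choose i)
          * (∑ j ∈ Finset.range (k - ℓ + 1), n.choose j) := by

  classical
  set 𝓑 := minFam (transv n k t F) with h𝓑
  set B𝓁 := 𝓑.filter (fun B => B.card = ℓ) with hB𝓁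
  set Q2 : Finset (Finset ℕ) :=
    (Finset.range (k - ℓ + 1)).biUnion (fun j => (Finset.Icc 1 n).powersetCard j) with hQ2
  have key : (((F.filter fun A => lvl 𝓑 A = ℓ) ×ˢ
        (F.filter fun A => s ≤ lvl 𝓑 A ∧ lvl 𝓑 A ≤ ℓ)).image fun p => p.1 ∩ p.2)
      ⊆ B𝓁.biUnion (fun B =>
        ((((Finset.Icc t ℓ).biUnion (fun i => B.powersetCard i)) ×ˢ Q2).image
          (fun p => p.1 ∪ p.2))) := by
    intro S hS
    simp only [Finset.mem_image, Finset.mem_product, Finset.mem_filter] at hS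
    obtain ⟨⟨A, G⟩, ⟨⟨hAF, hAlvl⟩, hGF, _, _⟩, rfl⟩ := hS
    have hApc := Finset.mem_powersetCard.mp (hF hAF)
    obtain ⟨hAsub, hAcard⟩ := hApc
    have hAlvl' : lvl 𝓑 A = ℓ := hAlvl
    have hB : ∃ B ∈ 𝓑, B ⊆ A ∧ B.card = ℓ := by
      rcases Nat.eq_zero_or_pos ℓ with h0 | hpos
      · obtain ⟨B, hBm, hBc⟩ := hs_mem
        have hs0 : s = 0 := by
          have := le_trans (le_max_left s t) hℓ₁; omega
        have : B = ∅ := Finset.card_eq_zero.mp (by omega)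
        subst this
        exact ⟨∅, hBm, Finset.empty_subset A, by simp [h0]⟩
      · have hne : (𝓑.filter fun B => B ⊆ A).Nonempty := by
          by_contra h
          rw [Finset.not_nonempty_iff_eq_empty] at h
          have h2 : lvl 𝓑 A = 0 := by rw [lvl, h]; simp
          omega
        obtain ⟨B, hBmem, hBsup⟩ := Finset.exists_mem_eq_sup _ hne Finset.card
        rw [Finset.mem_filter] at hBmem
        refine ⟨B, hBmem.1, hBmem.2, ?_⟩
        have h3 : lvl 𝓑 A = B.card := hBsup
        omega
    obtain ⟨B, hB𝓑, hBA, hBcard⟩ := hB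
    have hBtr : ∀ X ∈ F, t ≤ (B ∩ X).card := by
      have := hB𝓑
      rw [h𝓑, minFam, Finset.mem_filter] at this
      have := this.1
      rw [transv, Finset.mem_filter] at this
      exact this.2.2
    refine Finset.mem_biUnion.mpr ⟨B, Finset.mem_filter.mpr ⟨hB𝓑, hBcard⟩, ?_⟩
    refine Finset.mem_image.mpr ⟨(((A ∩ G) ∩ B), ((A ∩ G) \ B)),
      Finset.mem_product.mpr ⟨?_, ?_⟩, ?_⟩
    · refine Finset.mem_biUnion.mpr ⟨((A ∩ G) ∩ B).card, Finset.mem_Icc.mpr ⟨?_, ?_⟩,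
        Finset.mem_powersetCard.mpr ⟨Finset.inter_subset_right, rfl⟩⟩
      · have heq : (A ∩ G) ∩ B = B ∩ G := by
          ext x
          simp only [Finset.mem_inter]
          constructor
          · rintro ⟨⟨_, h2⟩, h3⟩; exact ⟨h3, h2⟩
          · rintro ⟨h1, h2⟩; exact ⟨⟨hBA h1, h2⟩, h1⟩
        rw [heq]
        exact hBtr G hGF
      · calc ((A ∩ G) ∩ B).card ≤ B.card := Finset.card_le_card Finset.inter_subset_right
          _ = ℓ := hBcard
    · refine Finset.mem_biUnion.mpr ⟨((A ∩ G) \ B).card, Finset.mem_range.mpr ?_,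
        Finset.mem_powersetCard.mpr ⟨?_, rfl⟩⟩
      · have h1 : (A ∩ G) \ B ⊆ A \ B :=
          Finset.sdiff_subset_sdiff Finset.inter_subset_left (le_refl B)
        have h2 : ((A ∩ G) \ B).card ≤ (A \ B).card := Finset.card_le_card h1
        have h3 : (A \ B).card = k - ℓ := by
          rw [Finset.card_sdiff_of_subset hBA, hAcard, hBcard]
        omega
      · intro x hx
        have : x ∈ A ∩ G := (Finset.mem_sdiff.mp hx).1
        exact hAsub (Finset.mem_inter.mp this).1
    · simp only []
      ext x
      simp only [Finset.mem_union, Finset.mem_inter, Finset.mem_sdiff]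
      tauto
  have cardQ2 : Q2.card ≤ ∑ j ∈ Finset.range (k - ℓ + 1), n.choose j := by
    refine le_trans (Finset.card_biUnion_le) (Finset.sum_le_sum fun j _ => ?_)
    rw [Finset.card_powersetCard, Nat.card_Icc]
    simp
  calc (((F.filter fun A => lvl 𝓑 A = ℓ) ×ˢ
        (F.filter fun A => s ≤ lvl 𝓑 A ∧ lvl 𝓑 A ≤ ℓ)).image fun p => p.1 ∩ p.2).card
      ≤ (B𝓁.biUnion (fun B =>
        ((((Finset.Icc t ℓ).biUnion (fun i => B.powersetCard i)) ×ˢ Q2).image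
          (fun p => p.1 ∪ p.2)))).card := Finset.card_le_card key
    _ ≤ ∑ B ∈ B𝓁, (((((Finset.Icc t ℓ).biUnion (fun i => B.powersetCard i)) ×ˢ Q2).image
          (fun p => p.1 ∪ p.2))).card := Finset.card_biUnion_le
    _ ≤ ∑ B ∈ B𝓁, (∑ i ∈ Finset.Icc t ℓ, ℓ.choose i) *
          (∑ j ∈ Finset.range (k - ℓ + 1), n.choose j) := by
        refine Finset.sum_le_sum fun B hB => ?_
        have hBcard : B.card = ℓ := (Finset.mem_filter.mp hB).2
        refine le_trans Finset.card_image_le ?_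
        rw [Finset.card_product]
        refine Nat.mul_le_mul ?_ cardQ2
        refine le_trans (Finset.card_biUnion_le) (Finset.sum_le_sum fun i _ => ?_)
        rw [Finset.card_powersetCard, hBcard]
    _ = B𝓁.card * ((∑ i ∈ Finset.Icc t ℓ, ℓ.choose i) *
          (∑ j ∈ Finset.range (k - ℓ + 1), n.choose j)) := by
        rw [Finset.sum_const, smul_eq_mul]
    _ = B𝓁.card * (∑ i ∈ Finset.Icc t ℓ, ℓ.choose i) *
          (∑ j ∈ Finset.range (k - ℓ + 1), n.choose j) := by ring
end
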